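/- arXiv:math/0204120 — 5 statements merged into one kernel-verified Lean document; each statement's English description precedes it below -/
import Mathlib

section
/- For every abelian group G, the space G^# is zero-dimensional: the clopen subsets of G^# form a basis for its topology. -/
/-! Write a character `χ : G → ℝ/ℤ` as `χ = ψ + φ` with `ψ = π ∘ χ`, where `π` is a
(discontinuous) retraction of `ℝ/ℤ` onto its divisible torsion subgroup `ℚ/ℤ`; then `φ` takes
values in `ker π`. Both are characters, hence Bohr-continuous. Torsion points have rational norm,
while nonzero points of `ker π` have irrational norm, so the `ψ`-preimage of a ball of irrational
radius and the `φ`-preimage of a ball of rational radius are clopen. Their intersection is a clopen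
neighbourhood of `a` inside `χ⁻¹ (ball (χ a) ε)` once both radii are below `ε / 2`. -/

/-- The Bohr topology on an abelian group `G`: the initial topology induced by the
family of all group homomorphisms from `G` to the circle group `ℝ/ℤ`. -/
noncomputable def bohrTopology (G : Type*) [AddCommGroup G] : TopologicalSpace G :=
  ⨅ χ : G →+ AddCircle (1 : ℝ), TopologicalSpace.induced χ inferInstance

open Metric TopologicalSpace Filter Topology

namespace UnitAddCircle

theorem isOfFinAddOrder_iff_exists_norm_eq_ratCast {t : UnitAddCircle} :
    IsOfFinAddOrder t ↔ ∃ q : ℚ, ‖t‖ = q := by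
  constructor
  · intro ht
    obtain ⟨k, hk⟩ := AddCircle.exists_norm_eq_of_isOfFinAddOrder ht
    exact ⟨k / addOrderOf t, by rw [hk, one_mul]; push_cast; rfl⟩
  · rintro ⟨q, hq⟩
    induction t using QuotientAddGroup.induction_on with
    | H x =>
    rw [UnitAddCircle.norm_eq] at hq
    rw [AddCircle.isOfFinAddOrder_iff_exists_rat_eq_div, div_one]
    rcases abs_eq (hq ▸ abs_nonneg _) |>.1 hq with h | h
    · exact ⟨round x + q, by push_cast; linarith⟩
    · exact ⟨round x - q, by push_cast; linarith⟩

theorem exists_retraction_torsion : ∃ π : UnitAddCircle →+ UnitAddCircle,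
    (∀ t, IsOfFinAddOrder (π t)) ∧ ∀ t, IsOfFinAddOrder t → π t = t := by
  obtain ⟨g, hg⟩ := LinearMap.exists_leftInverse_of_injective (Algebra.linearMap ℚ ℝ)
    (LinearMap.ker_eq_bot.2 Rat.cast_injective)
  have hg_rat (q : ℚ) : g q = q := LinearMap.congr_fun hg q
  let f : ℝ →+ ℝ := (Rat.castHom ℝ).toAddMonoidHom.comp g.toAddMonoidHom
  have hf : AddSubgroup.zmultiples (1 : ℝ) ≤ (AddSubgroup.zmultiples 1).comap f := by
    rintro _ ⟨n, rfl⟩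
    exact ⟨n, by simpa [f] using (congrArg ((↑) : ℚ → ℝ) (hg_rat n)).symm⟩
  refine ⟨QuotientAddGroup.map _ _ f hf, fun t ↦ ?_, fun t ht ↦ ?_⟩ <;>
    induction t using QuotientAddGroup.induction_on with
    | H x => ?_
  · exact AddCircle.isOfFinAddOrder_iff_exists_rat_eq_div.2 ⟨g x, by simp [f]⟩
  · obtain ⟨q, hq⟩ := AddCircle.isOfFinAddOrder_iff_exists_rat_eq_div.1 ht
    rw [div_one] at hq
    subst hq
    simp [f, hg_rat]

end UnitAddCircle

theorem isClopen_preimage_ball_of_forall_dist_ne {X M : Type*} [TopologicalSpace X]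
    [PseudoMetricSpace M] {f : X → M} (hf : Continuous f) {c : M} {r : ℝ}
    (h : ∀ x, dist (f x) c ≠ r) : IsClopen (f ⁻¹' ball c r) := by
  have : f ⁻¹' ball c r = f ⁻¹' closedBall c r :=
    Set.ext fun x ↦ (h x).le_iff_lt.symm
  exact ⟨this ▸ isClosed_closedBall.preimage hf, isOpen_ball.preimage hf⟩


open UnitAddCircle in
theorem AddMonoidHom.exists_isClopen_mem_subset_preimage {G : Type*} [AddCommGroup G]
    [TopologicalSpace G] (hcont : ∀ χ : G →+ UnitAddCircle, Continuous χ)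
    (χ : G →+ UnitAddCircle) {a : G} {U : Set UnitAddCircle} (hU : U ∈ 𝓝 (χ a)) :
    ∃ C, IsClopen C ∧ a ∈ C ∧ C ⊆ χ ⁻¹' U := by
  obtain ⟨π, hπ_tor, hπ_fix⟩ := exists_retraction_torsion
  obtain ⟨ε, hε, hεU⟩ := Metric.mem_nhds_iff.1 hU
  obtain ⟨r, hr_irr, hr_pos, hr_lt⟩ := exists_irrational_btwn (half_pos hε)
  obtain ⟨b, hb_pos, hb_lt⟩ := exists_rat_btwn (half_pos hε)
  set ψ := π.comp χ
  set φ := χ - ψ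
  have hψ (x : G) : dist (ψ x) (ψ a) ≠ r := by
    obtain ⟨q, hq⟩ := isOfFinAddOrder_iff_exists_norm_eq_ratCast.1 (hπ_tor (χ (x - a)))
    rw [dist_eq_norm, ← map_sub]
    exact fun h ↦ hr_irr ⟨q, hq ▸ h⟩
  have hφ (x : G) : dist (φ x) (φ a) ≠ b := by
    rw [dist_eq_norm, ← map_sub]
    intro h
    have hφ_tor := isOfFinAddOrder_iff_exists_norm_eq_ratCast.2 ⟨b, h⟩
    have hφ_zero : φ (x - a) = 0 := by
      rw [← hπ_fix _ hφ_tor]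
      simp [φ, ψ, hπ_fix _ (hπ_tor _)]
    rw [hφ_zero, norm_zero] at h
    exact hb_pos.ne h
  refine ⟨ψ ⁻¹' ball (ψ a) r ∩ φ ⁻¹' ball (φ a) b,
    (isClopen_preimage_ball_of_forall_dist_ne (hcont ψ) hψ).inter
      (isClopen_preimage_ball_of_forall_dist_ne (hcont φ) hφ),
    ⟨mem_ball_self hr_pos, mem_ball_self (by exact_mod_cast hb_pos)⟩, fun x ⟨hxψ, hxφ⟩ ↦ hεU ?_⟩
  calc dist (χ x) (χ a) = dist (ψ x + φ x) (ψ a + φ a) := by simp [φ]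
    _ ≤ dist (ψ x) (ψ a) + dist (φ x) (φ a) := dist_add_add_le _ _ _ _
    _ < ε / 2 + ε / 2 := add_lt_add (hxψ.trans hr_lt) (hxφ.trans hb_lt)
    _ = ε := add_halves ε

theorem isTopologicalBasis_isClopen_of_eq_iInf_induced {X ι : Type*} {Y : ι → Type*}
    [t : TopologicalSpace X] [∀ i, TopologicalSpace (Y i)] {f : ∀ i, X → Y i}
    (ht : t = ⨅ i, induced (f i) inferInstance)
    (h : ∀ i x, ∀ U ∈ 𝓝 (f i x), ∃ C, IsClopen C ∧ x ∈ C ∧ C ⊆ f i ⁻¹' U) :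
    IsTopologicalBasis {s : Set X | IsClopen s} := by
  refine isTopologicalBasis_of_isOpen_of_nhds (fun u hu ↦ hu.isOpen) fun a u hau hu ↦ ?_
  have hu_nhds := hu.mem_nhds hau
  rw [ht, nhds_iInf, mem_iInf] at hu_nhds
  obtain ⟨I, hI, V, hV, rfl⟩ := hu_nhds
  have hC (i : I) : ∃ C, IsClopen C ∧ a ∈ C ∧ C ⊆ V i := by
    obtain ⟨U, hU, hUV⟩ := mem_comap.1 (nhds_induced (f i) a ▸ hV i)
    obtain ⟨C, hC, haC, hCU⟩ := h i a U hU
    exact ⟨C, hC, haC, hCU.trans hUV⟩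
  choose C hC haC hCV using hC
  have := hI.to_subtype
  exact ⟨⋂ i, C i, isClopen_iInter_of_finite hC, Set.mem_iInter.2 haC, Set.iInter_mono hCV⟩

/-- For every abelian group `G`, the space `G^#` is zero-dimensional:
the clopen subsets form a basis for the topology. -/
theorem bohr_isTopologicalBasis_clopen (G : Type*) [AddCommGroup G] :
    letI := bohrTopology G
    TopologicalSpace.IsTopologicalBasis {s : Set G | IsClopen s} := by
  let _ := bohrTopology G
  have hcont (χ : G →+ UnitAddCircle) : Continuous χ :=
    continuous_iInf_dom continuous_induced_dom
  exact isTopologicalBasis_isClopen_of_eq_iInf_induced rfl fun χ _ _ ↦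
    χ.exists_isClopen_mem_subset_preimage hcont
end

section
/- For every abelian group G, every compact subset of G^# is finite. -/
open scoped Pointwise

/-!
The characters `G → ℝ/ℤ` form a compact group `Ĝ`, which carries a Haar probability measure `μ`.
For `g ≠ 0` some character is nonzero at `g`, and translating by it shows
`∫ exp (2πi χ g) dμ(χ) = 0`. If `xₙ → a` in a topology making all characters continuous, then
`χ (xₙ - a) → 0` for every `χ`, and dominated convergence makes these integrals tend to `1`:
so `xₙ = a` eventually.

Subgroups are closed in such a topology, since characters separate the points of quotients.
An infinite compact `K` thus contains the infinite compact set `K ∩ H`, with `H` the subgroup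
generated by a countably infinite subset of `K`. Countably many characters separate the points
of `K ∩ H`, so it is metrizable and carries an injective convergent sequence.
-/

open MeasureTheory Topology Filter

noncomputable def AddCircle.ratCastHom : AddCircle (1 : ℚ) →+ AddCircle (1 : ℝ) :=
  QuotientAddGroup.map _ _ (Rat.castHom ℝ).toAddMonoidHom <| by
    rintro _ ⟨n, rfl⟩
    exact ⟨n, by simp⟩

lemma AddCircle.ratCastHom_injective : Function.Injective AddCircle.ratCastHom := by
  rw [injective_iff_map_eq_zero]
  rintro ⟨q⟩ hq
  obtain ⟨n, hn⟩ := (AddCircle.coe_eq_zero_iff (1 : ℝ)).1 hq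
  have hnq : ((n : ℚ) : ℝ) = q := by simpa using hn
  exact (AddCircle.coe_eq_zero_iff (1 : ℚ)).2 ⟨n, by simpa using Rat.cast_injective hnq⟩

lemma exists_addMonoidHom_addCircle_apply_ne_zero {G : Type*} [AddCommGroup G] {g : G}
    (hg : g ≠ 0) : ∃ χ : G →+ AddCircle (1 : ℝ), χ g ≠ 0 := by
  obtain ⟨c, hc⟩ := CharacterModule.exists_character_apply_ne_zero_of_ne_zero hg
  exact ⟨AddCircle.ratCastHom.comp c,
    fun h ↦ hc (AddCircle.ratCastHom_injective (h.trans (map_zero _).symm))⟩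

lemma Set.Countable.addSubgroup_closure {G : Type*} [AddGroup G] {s : Set G}
    (hs : s.Countable) : (AddSubgroup.closure s : Set G).Countable := by
  have := hs.to_subtype
  rw [FreeAddGroup.closure_eq_range, AddMonoidHom.coe_range]
  exact Set.countable_range _

lemma integral_eq_zero_of_add_left_eq_mul {A 𝕜 : Type*} [AddGroup A] [MeasurableSpace A]
    [MeasurableAdd A] {μ : Measure A} [μ.IsAddLeftInvariant] [RCLike 𝕜] {e : A → 𝕜} {a : A}
    {c : 𝕜} (he : ∀ x, e (a + x) = c * e x) (hc : c ≠ 1) : ∫ x, e x ∂μ = 0 := by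
  have h : c * ∫ x, e x ∂μ = ∫ x, e x ∂μ := calc
    _ = ∫ x, e (a + x) ∂μ := by simp_rw [he, integral_const_mul]
    _ = _ := integral_add_left_eq_self e a
  by_contra h0
  exact hc ((mul_eq_right₀ h0).1 h)

section CharGroup

variable (G : Type*) [AddCommGroup G]

/-- The Pontryagin dual of `G` with the discrete topology. -/
def charGroup : AddSubgroup (G → AddCircle (1 : ℝ)) :=
  (AddMonoidHom.coeFn G (AddCircle (1 : ℝ))).range

instance : CompactSpace (charGroup G) :=
  isCompact_iff_compactSpace.mp (AddMonoidHom.isClosed_range_coe G (AddCircle (1 : ℝ))).isCompact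

variable {G}

noncomputable def charEval (g : G) (f : charGroup G) : ℂ :=
  AddCircle.toCircle ((f : G → AddCircle (1 : ℝ)) g)

lemma continuous_charEval (g : G) : Continuous (charEval g) :=
  continuous_subtype_val.comp <|
    AddCircle.continuous_toCircle.comp <| (continuous_apply g).comp continuous_subtype_val

lemma norm_charEval (g : G) (f : charGroup G) : ‖charEval g f‖ = 1 := Circle.norm_coe _

lemma charEval_add (g : G) (f f' : charGroup G) :
    charEval g (f + f') = charEval g f * charEval g f' := by
  simp [charEval, AddCircle.toCircle_add]

lemma integral_charEval_of_ne_zero [MeasurableSpace (charGroup G)]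
    [MeasurableAdd (charGroup G)] (μ : Measure (charGroup G)) [μ.IsAddLeftInvariant] {g : G}
    (hg : g ≠ 0) : ∫ f, charEval g f ∂μ = 0 := by
  obtain ⟨χ, hχ⟩ := exists_addMonoidHom_addCircle_apply_ne_zero hg
  refine integral_eq_zero_of_add_left_eq_mul (a := ⟨χ, χ, rfl⟩) (charEval_add g _) fun h ↦ hχ ?_
  exact AddCircle.injective_toCircle one_ne_zero <|
    Circle.coe_injective (by simpa [charEval] using h)

end CharGroup

lemma continuous_addMonoidHom_bohrTopology {G : Type*} [AddCommGroup G]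
    (χ : G →+ AddCircle (1 : ℝ)) : Continuous[bohrTopology G, inferInstance] χ :=
  continuous_iff_le_induced.mpr (iInf_le _ χ)

section ContinuousCharacters

variable {G : Type*} [AddCommGroup G] [TopologicalSpace G]
  (hcont : ∀ χ : G →+ AddCircle (1 : ℝ), Continuous χ)
include hcont

lemma AddSubgroup.isClosed_of_continuous_addCircle (H : AddSubgroup G) :
    IsClosed (H : Set G) := by
  have hH : (H : Set G) = ⋂ (χ : G →+ AddCircle (1 : ℝ)) (_ : H ≤ χ.ker), χ ⁻¹' {0} := by
    ext x
    simp only [Set.mem_iInter, Set.mem_preimage, Set.mem_singleton_iff, SetLike.mem_coe]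
    refine ⟨fun hx χ hχ ↦ hχ hx, fun hx ↦ ?_⟩
    by_contra hxH
    obtain ⟨χ, hχ⟩ := exists_addMonoidHom_addCircle_apply_ne_zero
      ((QuotientAddGroup.eq_zero_iff x).not.2 hxH)
    refine hχ (hx (χ.comp (QuotientAddGroup.mk' H)) fun h hh ↦ ?_)
    simp [(QuotientAddGroup.eq_zero_iff h).2 hh]
  rw [hH]
  exact isClosed_biInter fun χ _ ↦ isClosed_singleton.preimage (hcont χ)

lemma IsCompact.metrizableSpace_of_countable_of_continuous_addCircle {K : Set G}
    (hK : IsCompact K) (hc : K.Countable) : TopologicalSpace.MetrizableSpace K := by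
  have := hc.to_subtype
  have := isCompact_iff_compactSpace.mp hK
  have hsep (g : G) : ∃ χ : G →+ AddCircle (1 : ℝ), g ≠ 0 → χ g ≠ 0 := by
    by_cases hg : g = 0
    · exact ⟨0, fun h ↦ (h hg).elim⟩
    · exact (exists_addMonoidHom_addCircle_apply_ne_zero hg).imp fun _ h _ ↦ h
  choose χ hχ using hsep
  let Φ : K → K × K → AddCircle (1 : ℝ) := fun x p ↦ χ (p.1 - p.2) x
  have hΦ : Function.Injective Φ := by
    intro x y hxy
    by_contra hne
    refine hχ _ (sub_ne_zero.2 (Subtype.coe_injective.ne hne)) ?_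
    rw [map_sub]
    exact sub_eq_zero.2 (congrFun hxy (x, y))
  have hΦc : Continuous Φ := continuous_pi fun p ↦ (hcont _).comp continuous_subtype_val
  exact (hΦc.isClosedEmbedding hΦ).isEmbedding.metrizableSpace

lemma Filter.Tendsto.eventually_eq_of_continuous_addCircle {ι : Type*} {l : Filter ι}
    [l.IsCountablyGenerated] {x : ι → G} {a : G} (hx : Tendsto x l (𝓝 a)) :
    ∀ᶠ n in l, x n = a := by
  let _ : MeasurableSpace (charGroup G) := borel _
  have : BorelSpace (charGroup G) := ⟨rfl⟩
  let μ := Measure.addHaarMeasure (⊤ : TopologicalSpace.PositiveCompacts (charGroup G))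
  have : IsProbabilityMeasure μ := ⟨Measure.addHaarMeasure_self⟩
  have hpoint (f : charGroup G) : Tendsto (fun n ↦ charEval (x n - a) f) l (𝓝 1) := by
    rcases f with ⟨_, χ, rfl⟩
    have : Tendsto (fun n ↦ χ (x n - a)) l (𝓝 0) := by
      simpa using (((hcont χ).tendsto a).comp hx).sub_const (χ a)
    have hcirc := AddCircle.continuous_toCircle.tendsto (0 : AddCircle (1 : ℝ))
    rw [AddCircle.toCircle_zero] at hcirc
    exact ((continuous_subtype_val.tendsto _).comp hcirc).comp this
  have hlim := tendsto_integral_filter_of_dominated_convergence (μ := μ) (fun _ ↦ 1)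
    (.of_forall fun n ↦ (continuous_charEval (x n - a)).aestronglyMeasurable)
    (.of_forall fun n ↦ .of_forall fun f ↦ (norm_charEval _ f).le) (integrable_const 1)
    (.of_forall hpoint)
  simp only [integral_const, probReal_univ, one_smul] at hlim
  filter_upwards [hlim.eventually_ne one_ne_zero] with n hn
  by_contra h
  exact hn (integral_charEval_of_ne_zero μ (sub_ne_zero.2 h))

lemma IsCompact.finite_of_countable_of_continuous_addCircle {K : Set G} (hK : IsCompact K)
    (hc : K.Countable) : K.Finite := by
  by_contra hinf
  have := isCompact_iff_compactSpace.mp hK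
  have := hK.metrizableSpace_of_countable_of_continuous_addCircle hcont hc
  let x := Set.Infinite.natEmbedding K hinf
  obtain ⟨a, φ, hφ, hlim⟩ := CompactSpace.tendsto_subseq x
  obtain ⟨N, hN⟩ := eventually_atTop.1 <|
    ((continuous_subtype_val.tendsto a).comp hlim).eventually_eq_of_continuous_addCircle hcont
  have := hφ.injective <| x.injective <| Subtype.ext <|
    (hN N le_rfl).trans (hN (N + 1) N.le_succ).symm
  omega

lemma IsCompact.finite_of_continuous_addCircle {K : Set G} (hK : IsCompact K) : K.Finite := by
  by_contra hinf
  obtain ⟨T, hTK, hTc, hT⟩ := Set.Infinite.exists_subset_countable_infinite hinf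
  let H := AddSubgroup.closure T
  have hKH : (K ∩ H).Finite := IsCompact.finite_of_countable_of_continuous_addCircle hcont
    (hK.inter_right (H.isClosed_of_continuous_addCircle hcont))
    (hTc.addSubgroup_closure.mono Set.inter_subset_right)
  exact hT (hKH.subset (Set.subset_inter hTK AddSubgroup.subset_closure))

end ContinuousCharacters

/-- For every abelian group `G`, every compact subset of `G^#` is finite. -/
theorem bohr_isCompact_finite (G : Type*) [AddCommGroup G] :
    letI := bohrTopology G
    ∀ K : Set G, IsCompact K → K.Finite := by
  let _ := bohrTopology G
  exact fun _ hK ↦ hK.finite_of_continuous_addCircle continuous_addMonoidHom_bohrTopology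
end

section
/- For every infinite cardinal κ, the set [κ]^2 (the set of elements of B_κ whose support has exactly two elements) is relatively discrete in B_κ^# but is not closed in B_κ^#; indeed, 0 lies in the closure of [κ]^2 in B_κ^#. -/
/-!
Every character of `B_κ` takes values in the finite `2`-torsion of `ℝ/ℤ`. An element `x` whose
support has `n` elements is isolated among such elements by the Bohr-open set
`{y | supp x ⊆ supp y}`, which is cut out by the coordinate characters `y ↦ y a / 2`. Given finitely
many characters, pigeonhole yields `a ≠ b` at which all of them agree on `e_a` and `e_b`; they
then all vanish at `e_a + e_b ∈ [κ]^2`, so every Bohr neighbourhood of `0` meets `[κ]^2`.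
-/

open scoped Pointwise

open Filter Topology

section Bohr

variable {G : Type*} [AddCommGroup G]

lemma continuous_bohrTopology (χ : G →+ AddCircle (1 : ℝ)) :
    Continuous[bohrTopology G, _] χ :=
  continuous_iInf_dom continuous_induced_dom

lemma nhds_bohrTopology (x : G) :
    @nhds G (bohrTopology G) x = ⨅ χ : G →+ AddCircle (1 : ℝ), comap χ (𝓝 (χ x)) := by
  rw [bohrTopology, nhds_iInf]
  simp only [nhds_induced]

lemma mem_closure_bohrTopology {S : Set G} {x : G}
    (h : ∀ F : Finset (G →+ AddCircle (1 : ℝ)), ∃ s ∈ S, ∀ χ ∈ F, χ s = χ x) :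
    x ∈ closure[bohrTopology G] S := by
  let := bohrTopology G
  rw [mem_closure_iff_nhds, nhds_bohrTopology]
  intro U hU
  obtain ⟨I, hI, V, hV, -, rfl, -⟩ := mem_iInf'.1 hU
  obtain ⟨s, hsS, hs⟩ := h hI.toFinset
  refine ⟨s, Set.mem_iInter₂.2 fun χ hχ ↦ ?_, hsS⟩
  obtain ⟨W, hW, hWV⟩ := mem_comap.1 (hV χ)
  exact hWV <| by
    rw [Set.mem_preimage, hs χ (hI.mem_toFinset.2 hχ)]
    exact mem_of_mem_nhds hW

end Bohr

namespace Finsupp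

variable {κ : Type*}

lemma support_injective_zmod_two :
    Function.Injective (support : (κ →₀ ZMod 2) → Finset κ) := by
  intro x y h
  ext a
  have hne : ∀ u v : ZMod 2, u ≠ 0 → v ≠ 0 → u = v := by decide
  by_cases ha : a ∈ x.support
  · exact hne _ _ (mem_support_iff.1 ha) (mem_support_iff.1 (h ▸ ha))
  · rw [notMem_support_iff.1 ha, notMem_support_iff.1 (h ▸ ha)]

noncomputable def coordChar (N : ℕ) [NeZero N] (a : κ) : (κ →₀ ZMod N) →+ AddCircle (1 : ℝ) :=
  ZMod.toAddCircle.comp (applyAddHom a)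

lemma isOpen_setOf_subset_support (N : ℕ) [NeZero N] (s : Finset κ) :
    IsOpen[bohrTopology (κ →₀ ZMod N)] {y | s ⊆ y.support} := by
  let := bohrTopology (κ →₀ ZMod N)
  have hs : {y : κ →₀ ZMod N | s ⊆ y.support} = ⋂ a ∈ s, coordChar N a ⁻¹' {0}ᶜ := by
    ext y
    simp [Finset.subset_iff, coordChar]
  rw [hs]
  exact isOpen_biInter_finset fun a _ ↦
    isOpen_compl_singleton.preimage (continuous_bohrTopology _)

lemma discreteTopology_setOf_card_support_eq (n : ℕ) :
    letI := bohrTopology (κ →₀ ZMod 2)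
    DiscreteTopology {x : κ →₀ ZMod 2 | x.support.card = n} := by
  let := bohrTopology (κ →₀ ZMod 2)
  refine discreteTopology_iff_isOpen_singleton.2 fun ⟨x, hx⟩ ↦ isOpen_induced_iff.2
    ⟨_, isOpen_setOf_subset_support 2 x.support, ?_⟩
  ext ⟨y, hy⟩
  simp only [Set.mem_preimage, Set.mem_ofPred_eq, Set.mem_singleton_iff, Subtype.mk.injEq]
  refine ⟨fun hxy ↦ support_injective_zmod_two ?_, fun h ↦ h ▸ subset_rfl⟩
  exact (Finset.eq_of_subset_of_card_le hxy (by rw [hx, hy])).symm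

lemma zero_mem_closure_setOf_card_support_eq_two [Infinite κ] :
    (0 : κ →₀ ZMod 2) ∈ closure[bohrTopology (κ →₀ ZMod 2)] {x | x.support.card = 2} := by
  classical
  refine mem_closure_bohrTopology fun F ↦ ?_
  have htwo : ∀ a : κ, 2 • single a (1 : ZMod 2) = 0 := fun a ↦ by
    rw [smul_single]; exact single_eq_zero.2 (by decide)
  obtain ⟨a, -, b, -, hab, hχ⟩ := Set.infinite_univ.exists_ne_map_eq_of_mapsTo
    (f := fun a (χ : F) ↦ (χ : (κ →₀ ZMod 2) →+ AddCircle (1 : ℝ)) (single a 1))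
    (fun a _ ↦ Set.mem_univ_pi.2 fun χ ↦ by simp [← map_nsmul, htwo])
    (Set.Finite.pi fun _ ↦ AddCircle.finite_torsion 1 two_pos)
  refine ⟨single a 1 + single b 1, ?_, fun χ hχF ↦ ?_⟩
  · simp [support_single_add_single hab one_ne_zero one_ne_zero, hab]
  · rw [map_add, ← congrFun hχ ⟨χ, hχF⟩, map_zero, ← two_nsmul, ← map_nsmul, htwo, map_zero]

end Finsupp

/-- In the Boolean group `B_κ = ⊕_κ ℤ/2ℤ` with the Bohr topology, the set `[κ]^2`
(elements of support of size two) is relatively discrete but not closed;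
indeed `0` lies in its closure. -/
theorem bohr_pairs_discrete_not_closed (κ : Type*) [Infinite κ] :
    letI := bohrTopology (κ →₀ ZMod 2)
    DiscreteTopology {x : κ →₀ ZMod 2 | x.support.card = 2} ∧
    ¬ IsClosed {x : κ →₀ ZMod 2 | x.support.card = 2} ∧
    (0 : κ →₀ ZMod 2) ∈ closure {x : κ →₀ ZMod 2 | x.support.card = 2} := by
  let := bohrTopology (κ →₀ ZMod 2)
  have h0 := Finsupp.zero_mem_closure_setOf_card_support_eq_two (κ := κ)
  refine ⟨Finsupp.discreteTopology_setOf_card_support_eq 2, fun hclosed ↦ ?_, h0⟩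
  simpa using hclosed.closure_subset h0
end

section
/- Let G be an abelian group, let κ be an infinite cardinal, and let f : κ → G be an arbitrary function. Let D_κ = {0} ∪ [κ]^2 ⊆ B_κ carry the topology induced from B_κ^#. Then the map μ_f : D_κ → G^# defined by μ_f(0) = 0 and μ_f(e_α + e_β) = f(α) − f(β) for α < β < κ is continuous. Moreover, if the family {f(α) : α < κ} is independent in G (each f(α) ≠ 0, and whenever n_1 f(α_1) + ⋯ + n_k f(α_k) = 0 for distinct α_1, …, α_k and integers n_i, then n_i f(α_i) = 0 for every i), then μ_f is a topological embedding. -/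
/-!
Characters of the Boolean group `κ →₀ ZMod 2` take values in `{0, 1/2}`, so they factor
through `ZMod 2`. Hence the nonzero points of `D_κ` are isolated, and the neighbourhoods of `0`
in `D_κ` are cut out by finitely many colourings `κ → ZMod 2`: `e_γ + e_δ` lies in such a
neighbourhood iff `γ` and `δ` get the same colours.

Continuity at `0`: by compactness of the circle, `ψ ∘ f` is `ε`-constant on the classes of a
finite colouring. Embedding: as the circle is divisible, independence lets one prescribe each
`ψ (f α)` freely among the elements killed by the order of `f α`; taking values of norm `≥ 1/3`
on a set `S` and `0` off `S` gives a character that keeps `f γ - f δ` away from `0` whenever `S`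
separates `γ` from `δ`.
-/

open scoped Pointwise

open Topology Filter

section BohrTopology

variable {H : Type*} [AddCommGroup H]

theorem continuous_bohrTopology_iff {X : Type*} [tX : TopologicalSpace X] {g : X → H} :
    Continuous[tX, bohrTopology H] g ↔ ∀ χ : H →+ UnitAddCircle, Continuous (χ ∘ g) :=
  continuous_iInf_rng.trans <| forall_congr' fun _ => continuous_induced_rng

theorem continuous_bohrTopology_addCircle (χ : H →+ UnitAddCircle) :
    Continuous[bohrTopology H, _] χ :=
  continuous_iInf_dom continuous_induced_dom

theorem continuous_bohrTopology_zmod {N : ℕ} [NeZero N] (φ : H →+ ZMod N) :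
    @Continuous H (ZMod N) (bohrTopology H) _ φ :=
  let := bohrTopology H
  (continuous_of_discreteTopology.isClosedEmbedding (ZMod.toAddCircle_injective N)).isEmbedding
    |>.continuous_iff.2 (continuous_bohrTopology_addCircle (ZMod.toAddCircle.comp φ))

theorem exists_toAddCircle_comp_eq {N : ℕ} [NeZero N] (hH : ∀ x : H, N • x = 0)
    (χ : H →+ UnitAddCircle) : ∃ φ : H →+ ZMod N, ZMod.toAddCircle.comp φ = χ := by
  have hrange : ∀ x, χ x ∈ (ZMod.toAddCircle (N := N)).range := fun x => by
    obtain ⟨m, -, hm⟩ := (AddCircle.nsmul_eq_zero_iff (u := χ x) (NeZero.pos N)).1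
      (by rw [← map_nsmul, hH, map_zero])
    exact ⟨m, by rw [ZMod.toAddCircle_natCast, ← hm, mul_one]⟩
  refine ⟨(AddMonoidHom.ofInjective (ZMod.toAddCircle_injective N)).symm.toAddMonoidHom.comp
    (χ.codRestrict _ hrange), AddMonoidHom.ext fun x => ?_⟩
  simp

theorem nhds_zero_bohrTopology {N : ℕ} [NeZero N] (hH : ∀ x : H, N • x = 0) :
    @nhds H (bohrTopology H) 0 = ⨅ φ : H →+ ZMod N, 𝓟 (φ.ker : Set H) := by
  refine le_antisymm (le_iInf fun φ => le_principal_iff.2 ?_) ?_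
  · let := bohrTopology H
    exact ((isOpen_discrete {0}).preimage (continuous_bohrTopology_zmod φ)).mem_nhds (map_zero φ)
  · rw [bohrTopology, nhds_iInf]
    refine le_iInf fun χ => ?_
    obtain ⟨φ, rfl⟩ := exists_toAddCircle_comp_eq hH χ
    refine iInf_le_of_le φ fun U hU => ?_
    rw [nhds_induced] at hU
    obtain ⟨V, hV, hVU⟩ := mem_comap.1 hU
    exact mem_principal.2 fun x hx =>
      hVU (by simpa [(AddMonoidHom.mem_ker).1 hx] using mem_of_mem_nhds hV)

end BohrTopology

theorem exists_finite_range_forall_eq_dist_lt {ι X : Type*} [PseudoMetricSpace X]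
    [CompactSpace X] (g : ι → X) {ε : ℝ} (hε : 0 < ε) :
    ∃ c : ι → X, (Set.range c).Finite ∧ ∀ i j, c i = c j → dist (g i) (g j) < ε := by
  obtain ⟨t, -, ht, hcover⟩ := (isCompact_univ (X := X)).finite_cover_balls (half_pos hε)
  have hnear : ∀ i, ∃ x ∈ t, g i ∈ Metric.ball x (ε / 2) := fun i => by
    simpa using hcover (Set.mem_univ (g i))
  choose c hct hc using hnear
  refine ⟨c, ht.subset (Set.range_subset_iff.2 hct), fun i j hij => ?_⟩
  calc dist (g i) (g j) ≤ dist (g i) (c i) + dist (g j) (c j) := by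
        rw [hij]; exact dist_triangle_right _ _ _
    _ < ε / 2 + ε / 2 := add_lt_add (hc i) (hc j)
    _ = ε := add_halves ε

theorem mem_iff_mem_of_norm_sub_lt {ι E : Type*} [SeminormedAddGroup E] {S : Set ι} {v : ι → E}
    {r : ℝ} (hS : ∀ i ∈ S, r ≤ ‖v i‖) (hSc : ∀ i ∉ S, v i = 0) {i j : ι}
    (h : ‖v i - v j‖ < r) : i ∈ S ↔ j ∈ S := by
  constructor <;> intro hmem <;> by_contra hnot
  · rw [hSc j hnot, sub_zero] at h
    exact (hS i hmem).not_gt h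
  · rw [hSc i hnot, zero_sub, norm_neg] at h
    exact (hS j hmem).not_gt h

theorem exists_nsmul_eq_zero_one_third_le_norm {n : ℕ} (hn : n ≠ 1) :
    ∃ t : UnitAddCircle, n • t = 0 ∧ 1 / 3 ≤ ‖t‖ := by
  have hnorm (r : ℝ) (h₁ : 1 / 3 ≤ r) (h₂ : r ≤ 1 / 2) : 1 / 3 ≤ ‖(r : UnitAddCircle)‖ := by
    have hr : |r| = r := abs_of_nonneg (by linarith)
    rwa [(AddCircle.norm_coe_eq_abs_iff (p := 1) one_ne_zero).2 (by rw [abs_one, hr]; exact h₂),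
      hr]
  rcases Nat.lt_or_ge n 2 with hn2 | hn2
  · obtain rfl : n = 0 := by omega
    exact ⟨↑(1 / 2 : ℝ), zero_smul _ _, hnorm _ (by norm_num) (by norm_num)⟩
  have hn0 : (0 : ℝ) < n := by positivity
  refine ⟨↑((n / 2 : ℕ) / n : ℝ), ?_, hnorm _ ?_ ?_⟩
  · rw [← AddCircle.coe_nsmul, nsmul_eq_mul, mul_div_cancel₀ _ hn0.ne',
      AddCircle.coe_eq_zero_iff]
    exact ⟨(n / 2 : ℕ), by rw [zsmul_eq_mul, mul_one, Int.cast_natCast]⟩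
  · rw [le_div_iff₀ hn0]
    have : (n : ℝ) ≤ 3 * (n / 2 : ℕ) := by exact_mod_cast (by omega : n ≤ 3 * (n / 2))
    linarith
  · rw [div_le_iff₀ hn0]
    have : (2 * (n / 2 : ℕ) : ℝ) ≤ n := by exact_mod_cast (by omega : 2 * (n / 2) ≤ n)
    linarith

theorem AddMonoidHom.exists_comp_eq_of_ker_le {M N Q : Type*} [AddCommGroup M]
    [AddCommGroup N] [AddCommGroup Q] [DivisibleBy Q ℤ] (π : M →+ N) (φ : M →+ Q)
    (h : π.ker ≤ φ.ker) :
    ∃ ψ : N →+ Q, ψ.comp π = φ := by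
  obtain ⟨ψ, hψ⟩ := Module.Baer.extension_property_addMonoidHom (Module.Baer.of_divisible Q)
    π.range.subtype Subtype.coe_injective
    ((QuotientAddGroup.lift π.ker φ h).comp (QuotientAddGroup.quotientKerEquivRange π).symm)
  refine ⟨ψ, AddMonoidHom.ext fun x => ?_⟩
  have hsymm : (QuotientAddGroup.quotientKerEquivRange π).symm (π.rangeRestrict x) = x :=
    (AddEquiv.symm_apply_eq _).2 rfl
  simpa [hsymm] using DFunLike.congr_fun hψ (π.rangeRestrict x)

section Independence

variable {κ G : Type*} [AddCommGroup G]

/-- Independence in the sense of abelian groups: a vanishing relation kills each of its terms,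
not necessarily each coefficient. -/
def AddIndependent (f : κ → G) : Prop :=
  ∀ (s : Finset κ) (n : κ → ℤ), ∑ α ∈ s, n α • f α = 0 → ∀ α ∈ s, n α • f α = 0

theorem AddIndependent.exists_addMonoidHom_apply_eq {Q : Type*} [AddCommGroup Q]
    [DivisibleBy Q ℤ] {f : κ → G} (hf : AddIndependent f) (c : κ → Q)
    (hc : ∀ α, addOrderOf (f α) • c α = 0) :
    ∃ ψ : G →+ Q, ∀ α, ψ (f α) = c α := by
  obtain ⟨ψ, hψ⟩ := AddMonoidHom.exists_comp_eq_of_ker_le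
    (Finsupp.linearCombination ℤ f).toAddMonoidHom (Finsupp.linearCombination ℤ c).toAddMonoidHom
    fun n hn => by
      have hrel := hf n.support n
        (by simpa [Finsupp.linearCombination_apply, Finsupp.sum] using hn)
      simp only [AddMonoidHom.mem_ker, LinearMap.toAddMonoidHom_coe,
        Finsupp.linearCombination_apply, Finsupp.sum]
      refine Finset.sum_eq_zero fun α hα => ?_
      obtain ⟨k, hk⟩ := addOrderOf_dvd_iff_zsmul_eq_zero.2 (hrel α hα)
      rw [hk, mul_comm, mul_zsmul, natCast_zsmul, hc, smul_zero]
  exact ⟨ψ, fun α => by simpa using DFunLike.congr_fun hψ (Finsupp.single α 1)⟩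

theorem AddIndependent.exists_addMonoidHom_separating {f : κ → G} (hf : AddIndependent f)
    (hne : ∀ α, f α ≠ 0) (S : Set κ) :
    ∃ ψ : G →+ UnitAddCircle, (∀ α ∈ S, 1 / 3 ≤ ‖ψ (f α)‖) ∧ ∀ α ∉ S, ψ (f α) = 0 := by
  classical
  choose t ht₀ ht using fun α => exists_nsmul_eq_zero_one_third_le_norm
    (mt AddMonoid.addOrderOf_eq_one_iff.1 (hne α))
  obtain ⟨ψ, hψ⟩ := hf.exists_addMonoidHom_apply_eq (fun α => if α ∈ S then t α else 0)
    fun α => by split_ifs <;> simp [ht₀]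
  exact ⟨ψ, fun α hα => by simpa [hψ, hα] using ht α, fun α hα => by simp [hψ, hα]⟩

end Independence

section Pairs

variable {κ : Type*}

open Finsupp

theorem Finsupp.eq_of_support_eq_zmod_two {x y : κ →₀ ZMod 2} (h : x.support = y.support) :
    x = y := by
  ext η
  have hη := congrArg (η ∈ ·) h
  simp only [mem_support_iff, eq_iff_iff] at hη
  revert hη
  generalize x η = a
  generalize y η = b
  revert a b
  decide

theorem Finsupp.support_single_add_single_one [DecidableEq κ] {γ δ : κ} (h : γ ≠ δ) :
    (single γ (1 : ZMod 2) + single δ 1).support = {γ, δ} :=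
  support_single_add_single h one_ne_zero one_ne_zero

theorem Finsupp.exists_eq_single_add_single_of_card_support_eq_two {x : κ →₀ ZMod 2}
    (hx : x.support.card = 2) : ∃ γ δ, γ ≠ δ ∧ x = single γ 1 + single δ 1 := by
  classical
  obtain ⟨γ, δ, hγδ, hs⟩ := Finset.card_eq_two.1 hx
  refine ⟨γ, δ, hγδ, eq_of_support_eq_zmod_two ?_⟩
  rw [hs, support_single_add_single_one hγδ]

theorem Finsupp.eq_single_add_single_of_apply_ne_zero {x : κ →₀ ZMod 2}
    (hx : x = 0 ∨ x.support.card = 2) {α β : κ} (hαβ : α ≠ β) (hα : x α ≠ 0) (hβ : x β ≠ 0) :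
    x = single α 1 + single β 1 := by
  classical
  have hsub : {α, β} ⊆ x.support := by simp [Finset.insert_subset_iff, hα, hβ]
  have hcard : x.support.card = 2 := hx.resolve_left fun h => hα (by simp [h])
  refine eq_of_support_eq_zmod_two ?_
  rw [support_single_add_single_one hαβ]
  exact (Finset.eq_of_subset_of_card_le hsub (by rw [hcard, Finset.card_pair hαβ])).symm

theorem AddMonoidHom.map_add_eq_zero_iff_zmod_two {M : Type*} [AddCommGroup M]
    (φ : M →+ ZMod 2) (x y : M) : φ (x + y) = 0 ↔ (φ x = 0 ↔ φ y = 0) := by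
  rw [map_add]
  generalize φ x = a
  generalize φ y = b
  revert a b
  decide

/-- `D_κ = {0} ∪ [κ]²` inside `B_κ`. -/
abbrev PairsWithZero (κ : Type*) := {x : κ →₀ ZMod 2 // x = 0 ∨ x.support.card = 2}

theorem isOpen_singleton_of_ne_zero {a : PairsWithZero κ} (ha : (a : κ →₀ ZMod 2) ≠ 0) :
    letI := bohrTopology (κ →₀ ZMod 2); IsOpen {a} := by
  let := bohrTopology (κ →₀ ZMod 2)
  obtain ⟨α, β, hαβ, hab⟩ :=
    exists_eq_single_add_single_of_card_support_eq_two (a.2.resolve_left ha)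
  have hsingle : ({a} : Set (PairsWithZero κ)) =
      {y : PairsWithZero κ | (y : κ →₀ ZMod 2) α ≠ 0} ∩ {y | (y : κ →₀ ZMod 2) β ≠ 0} := by
    ext y
    constructor
    · rintro rfl
      simp [hab, hαβ, hαβ.symm]
    · rintro ⟨hα, hβ⟩
      exact Subtype.ext ((eq_single_add_single_of_apply_ne_zero y.2 hαβ hα hβ).trans hab.symm)
  have hcoord (η : κ) : Continuous fun y : PairsWithZero κ => applyAddHom η (y : κ →₀ ZMod 2) :=
    (continuous_bohrTopology_zmod (N := 2) (applyAddHom η)).comp continuous_subtype_val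
  rw [hsingle]
  exact ((isOpen_discrete {0}ᶜ).preimage (hcoord α)).inter
    ((isOpen_discrete {0}ᶜ).preimage (hcoord β))

end Pairs

section PairDifference

variable {κ G : Type*} [AddCommGroup G]

open Finsupp

theorem nhds_pairsWithZero_of_eq_zero {y₀ : PairsWithZero κ}
    (hy₀ : (y₀ : κ →₀ ZMod 2) = 0) :
    letI := bohrTopology (κ →₀ ZMod 2)
    𝓝 y₀ = ⨅ φ : (κ →₀ ZMod 2) →+ ZMod 2, 𝓟 {y : PairsWithZero κ | φ y = 0} := by
  let := bohrTopology (κ →₀ ZMod 2)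
  rw [nhds_induced, hy₀, nhds_zero_bohrTopology (N := 2) fun x => ?_, comap_iInf]
  · simp_rw [comap_principal]
    rfl
  · rw [two_nsmul]
    ext
    exact CharTwo.add_self_eq_zero _

def IsPairDifference (f : κ → G) (μ : PairsWithZero κ → G) : Prop :=
  ∀ y : PairsWithZero κ, ((y : κ →₀ ZMod 2) = 0 ∧ μ y = 0) ∨
    ∃ γ δ, γ ≠ δ ∧ (y : κ →₀ ZMod 2) = single γ 1 + single δ 1 ∧ μ y = f γ - f δ

theorem isPairDifference_of [LinearOrder κ] {f : κ → G} {μ : PairsWithZero κ → G}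
    (hμ0 : ∀ x : PairsWithZero κ, (x : κ →₀ ZMod 2) = 0 → μ x = 0)
    (hμ2 : ∀ α β : κ, α < β → ∀ x : PairsWithZero κ,
      (x : κ →₀ ZMod 2) = single α 1 + single β 1 → μ x = f α - f β) :
    IsPairDifference f μ := fun y => by
  rcases y.2 with hy | hy
  · exact Or.inl ⟨hy, hμ0 y hy⟩
  obtain ⟨γ, δ, hγδ, hyγδ⟩ := exists_eq_single_add_single_of_card_support_eq_two hy
  rcases hγδ.lt_or_gt with hlt | hlt
  · exact Or.inr ⟨γ, δ, hγδ, hyγδ, hμ2 γ δ hlt y hyγδ⟩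
  · rw [add_comm] at hyγδ
    exact Or.inr ⟨δ, γ, hγδ.symm, hyγδ, hμ2 δ γ hlt y hyγδ⟩

namespace IsPairDifference

variable {f : κ → G} {μ : PairsWithZero κ → G}

theorem apply_eq_zero (hμ : IsPairDifference f μ) {y : PairsWithZero κ}
    (hy : (y : κ →₀ ZMod 2) = 0) : μ y = 0 := by
  rcases hμ y with ⟨-, h⟩ | ⟨γ, δ, hγδ, hyγδ, -⟩
  · exact h
  · simpa [hγδ.symm] using congrArg (· γ) (hyγδ.symm.trans hy)

theorem continuousAt_of_eq_zero (hμ : IsPairDifference f μ) (ψ : G →+ UnitAddCircle)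
    {y₀ : PairsWithZero κ} (hy₀ : (y₀ : κ →₀ ZMod 2) = 0) :
    letI := bohrTopology (κ →₀ ZMod 2); ContinuousAt (ψ ∘ μ) y₀ := by
  let := bohrTopology (κ →₀ ZMod 2)
  classical
  rw [ContinuousAt, Function.comp_apply, hμ.apply_eq_zero hy₀, map_zero, Metric.tendsto_nhds]
  intro ε hε
  obtain ⟨c, hc_fin, hc⟩ := exists_finite_range_forall_eq_dist_lt (ψ ∘ f) hε
  let φ : UnitAddCircle → (κ →₀ ZMod 2) →+ ZMod 2 := fun t =>
    (linearCombination (ZMod 2) fun η => if c η = t then 1 else 0).toAddMonoidHom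
  have hφ : ∀ t η, φ t (single η 1) = 0 ↔ c η ≠ t := fun t η => by simp [φ]
  have hU : ⋂ t ∈ Set.range c, {y : PairsWithZero κ | φ t y = 0} ∈ 𝓝 y₀ := by
    rw [nhds_pairsWithZero_of_eq_zero hy₀]
    exact (biInter_mem hc_fin).2 fun t _ => mem_iInf_of_mem (φ t) (mem_principal_self _)
  filter_upwards [hU] with y hy
  rcases hμ y with ⟨-, hμy⟩ | ⟨γ, δ, -, hyγδ, hμy⟩
  · simpa [hμy] using hε
  · have hφγ : φ (c γ) (y : κ →₀ ZMod 2) = 0 := Set.mem_iInter₂.1 hy (c γ) ⟨γ, rfl⟩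
    rw [hyγδ, AddMonoidHom.map_add_eq_zero_iff_zmod_two, hφ, hφ] at hφγ
    have hcol : c δ = c γ := by simpa using hφγ
    rw [Function.comp_apply, dist_zero_right, hμy, map_sub, ← dist_eq_norm]
    exact hc γ δ hcol.symm

theorem continuous (hμ : IsPairDifference f μ) :
    letI := bohrTopology (κ →₀ ZMod 2); letI := bohrTopology G; Continuous μ := by
  let := bohrTopology (κ →₀ ZMod 2)
  refine continuous_bohrTopology_iff.2 fun ψ => continuous_iff_continuousAt.2 fun y => ?_
  by_cases hy : (y : κ →₀ ZMod 2) = 0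
  · exact hμ.continuousAt_of_eq_zero ψ hy
  · rw [ContinuousAt,
      (isOpen_singleton_iff_nhds_eq_pure y).1 (isOpen_singleton_of_ne_zero hy)]
    exact tendsto_pure_nhds _ _

theorem exists_apply_ne_zero_of_map_ne_zero (hμ : IsPairDifference f μ) {S : Set κ}
    {ψ : G →+ UnitAddCircle} (hψ : ∀ η ∉ S, ψ (f η) = 0) {y : PairsWithZero κ}
    (hy : ψ (μ y) ≠ 0) : ∃ η ∈ S, (y : κ →₀ ZMod 2) η ≠ 0 := by
  rcases hμ y with ⟨-, hμy⟩ | ⟨γ, δ, hγδ, hyγδ, hμy⟩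
  · simp [hμy] at hy
  · by_contra! h
    have hγ : γ ∉ S := fun hγ => by simpa [hyγδ, hγδ.symm] using h γ hγ
    have hδ : δ ∉ S := fun hδ => by simpa [hyγδ, hγδ] using h δ hδ
    exact hy (by rw [hμy, map_sub, hψ γ hγ, hψ δ hδ, sub_zero])

theorem exists_mem_nhds_preimage_subset_singleton (hμ : IsPairDifference f μ)
    (hf : AddIndependent f) (hne : ∀ α, f α ≠ 0) {a : PairsWithZero κ}
    (ha : (a : κ →₀ ZMod 2) ≠ 0) :
    letI := bohrTopology G; ∃ W ∈ 𝓝 (μ a), μ ⁻¹' W ⊆ {a} := by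
  let := bohrTopology G
  rcases hμ a with ⟨ha0, -⟩ | ⟨α, β, hαβ, hab, hμa⟩
  · exact absurd ha0 ha
  obtain ⟨ψα, hψα, hψαc⟩ := hf.exists_addMonoidHom_separating hne {α}
  obtain ⟨ψβ, hψβ, hψβc⟩ := hf.exists_addMonoidHom_separating hne {β}
  have hpos : ∀ {x : UnitAddCircle}, 1 / 3 ≤ ‖x‖ → x ≠ 0 := fun hx =>
    norm_pos_iff.1 (lt_of_lt_of_le (by norm_num) hx)
  have hopen : IsOpen {g : G | ψα g ≠ 0 ∧ ψβ g ≠ 0} :=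
    (isOpen_compl_singleton.preimage (continuous_bohrTopology_addCircle ψα)).inter
      (isOpen_compl_singleton.preimage (continuous_bohrTopology_addCircle ψβ))
  refine ⟨_, hopen.mem_nhds ⟨?_, ?_⟩, fun y hy => ?_⟩
  · rw [hμa, map_sub, hψαc β hαβ.symm, sub_zero]
    exact hpos (hψα α rfl)
  · rw [hμa, map_sub, hψβc α hαβ, zero_sub, neg_ne_zero]
    exact hpos (hψβ β rfl)
  · obtain ⟨_, rfl, hyα⟩ := hμ.exists_apply_ne_zero_of_map_ne_zero hψαc hy.1
    obtain ⟨_, rfl, hyβ⟩ := hμ.exists_apply_ne_zero_of_map_ne_zero hψβc hy.2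
    exact Subtype.ext ((eq_single_add_single_of_apply_ne_zero y.2 hαβ hyα hyβ).trans hab.symm)

theorem comap_nhds_le_of_eq_zero (hμ : IsPairDifference f μ) (hf : AddIndependent f)
    (hne : ∀ α, f α ≠ 0) {y₀ : PairsWithZero κ} (hy₀ : (y₀ : κ →₀ ZMod 2) = 0) :
    letI := bohrTopology (κ →₀ ZMod 2); letI := bohrTopology G
    comap μ (𝓝 (μ y₀)) ≤ 𝓝 y₀ := by
  let := bohrTopology G
  rw [nhds_pairsWithZero_of_eq_zero hy₀, hμ.apply_eq_zero hy₀]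
  refine le_iInf fun φ => le_principal_iff.2 ?_
  obtain ⟨ψ, hψS, hψSc⟩ := hf.exists_addMonoidHom_separating hne {η | φ (single η 1) ≠ 0}
  have hW : ψ ⁻¹' Metric.ball 0 (1 / 3) ∈ 𝓝 (0 : G) :=
    (Metric.isOpen_ball.preimage (continuous_bohrTopology_addCircle ψ)).mem_nhds (by simp)
  refine mem_of_superset (preimage_mem_comap hW) fun y hy => ?_
  rcases hμ y with ⟨hy0, -⟩ | ⟨γ, δ, -, hyγδ, hμy⟩
  · simp [hy0]
  · have hnorm : ‖ψ (f γ) - ψ (f δ)‖ < 1 / 3 := by simpa [hμy] using hy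
    have hsep := mem_iff_mem_of_norm_sub_lt (v := fun η => ψ (f η)) hψS hψSc hnorm
    show φ (y : κ →₀ ZMod 2) = 0
    rw [hyγδ, AddMonoidHom.map_add_eq_zero_iff_zmod_two]
    simpa [not_iff_not] using hsep

theorem isEmbedding (hμ : IsPairDifference f μ) (hf : AddIndependent f)
    (hne : ∀ α, f α ≠ 0) :
    letI := bohrTopology (κ →₀ ZMod 2); letI := bohrTopology G; IsEmbedding μ := by
  let := bohrTopology (κ →₀ ZMod 2)
  let := bohrTopology G
  have hpair (a : PairsWithZero κ) :=
    hμ.exists_mem_nhds_preimage_subset_singleton hf hne (a := a)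
  refine IsEmbedding.mk' μ (fun y z hyz => ?_) fun y =>
    le_antisymm ?_ (hμ.continuous.tendsto y).le_comap
  · by_cases hz : (z : κ →₀ ZMod 2) = 0
    · by_cases hy : (y : κ →₀ ZMod 2) = 0
      · exact Subtype.ext (hy.trans hz.symm)
      · obtain ⟨W, hW, hWy⟩ := hpair y hy
        exact (hWy (show μ z ∈ W from hyz ▸ mem_of_mem_nhds hW)).symm
    · obtain ⟨W, hW, hWz⟩ := hpair z hz
      exact hWz (show μ y ∈ W from hyz ▸ mem_of_mem_nhds hW)
  · by_cases hy : (y : κ →₀ ZMod 2) = 0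
    · exact hμ.comap_nhds_le_of_eq_zero hf hne hy
    · obtain ⟨W, hW, hWy⟩ := hpair y hy
      rw [(isOpen_singleton_iff_nhds_eq_pure y).1 (isOpen_singleton_of_ne_zero hy),
        le_pure_iff]
      exact mem_of_superset (preimage_mem_comap hW) hWy

end IsPairDifference

end PairDifference

theorem bohr_mu_continuous_and_embedding_general (κ G : Type*) [LinearOrder κ]
    [AddCommGroup G] (f : κ → G)
    (μ : {x : κ →₀ ZMod 2 // x = 0 ∨ x.support.card = 2} → G)
    (hμ0 : ∀ x : {x : κ →₀ ZMod 2 // x = 0 ∨ x.support.card = 2}, (x : κ →₀ ZMod 2) = 0 →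
      μ x = 0)
    (hμ2 : ∀ (α β : κ), α < β → ∀ x : {x : κ →₀ ZMod 2 // x = 0 ∨ x.support.card = 2},
      (x : κ →₀ ZMod 2) = Finsupp.single α 1 + Finsupp.single β 1 → μ x = f α - f β) :
    letI := bohrTopology (κ →₀ ZMod 2)
    letI := bohrTopology G
    Continuous μ ∧
      (((∀ α, f α ≠ 0) ∧ ∀ (s : Finset κ) (n : κ → ℤ),
          ∑ α ∈ s, n α • f α = 0 → ∀ α ∈ s, n α • f α = 0) →
        Topology.IsEmbedding μ) := by
  have hμ := isPairDifference_of hμ0 hμ2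
  exact ⟨hμ.continuous, fun ⟨hne, hf⟩ => hμ.isEmbedding hf hne⟩

/-- Let `G` be an abelian group, `κ` an infinite (linearly ordered) index set and
`f : κ → G`. The map `μ_f : 𝒟_κ = {0} ∪ [κ]² → G^#`, `μ_f 0 = 0`,
`μ_f (e_α + e_β) = f α - f β` for `α < β`, is continuous; moreover if the family
`{f α}` is independent then `μ_f` is a topological embedding. -/
theorem bohr_mu_continuous_and_embedding (κ G : Type*) [LinearOrder κ] [Infinite κ]
    [AddCommGroup G] (f : κ → G)
    (μ : {x : κ →₀ ZMod 2 // x = 0 ∨ x.support.card = 2} → G)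
    (hμ0 : ∀ x : {x : κ →₀ ZMod 2 // x = 0 ∨ x.support.card = 2}, (x : κ →₀ ZMod 2) = 0 →
      μ x = 0)
    (hμ2 : ∀ (α β : κ), α < β → ∀ x : {x : κ →₀ ZMod 2 // x = 0 ∨ x.support.card = 2},
      (x : κ →₀ ZMod 2) = Finsupp.single α 1 + Finsupp.single β 1 → μ x = f α - f β) :
    letI := bohrTopology (κ →₀ ZMod 2)
    letI := bohrTopology G
    Continuous μ ∧
      (((∀ α, f α ≠ 0) ∧ ∀ (s : Finset κ) (n : κ → ℤ),
          ∑ α ∈ s, n α • f α = 0 → ∀ α ∈ s, n α • f α = 0) →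
        Topology.IsEmbedding μ) :=
  bohr_mu_continuous_and_embedding_general κ G f μ hμ0 hμ2
end

section
/- The set D_ω = {0} ∪ [ω]^2, equipped with the topology induced from B_ω^#, is not a retract of B_ω^#: there is no continuous map r : B_ω^# → D_ω whose restriction to D_ω is the identity. -/
open scoped Pointwise

/-!
A character of a group of exponent `n` takes values in the finite `n`-torsion of `ℝ/ℤ`, so in the
Bohr topology the sets `{y | ψ y = ψ x for all ψ ∈ t}`, `t` a finite set of characters, form a
neighbourhood basis at `x`. Each pair is isolated in `{0} ∪ [ω]²`, so a retraction `r` equals the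
pair `p` on such a set, given by some finite `Q p`. By pigeonhole, choose pairs
`pₖ = e_{aₖ} + e_{bₖ}` with `a₀ < b₀ < a₁ < b₁ < ⋯` such that every `ψ ∈ Q pₖ` vanishes on all
later `pₗ`; then `r (pₖ + pₗ) = pₖ` for `k < l`. Let `χ` be the character with `χ e_{aₖ} = 1/2`
and `χ e_{bₖ} = 0`. Near `0` the retraction keeps `χ ∘ r = 0`, and by pigeonhole again some
`pₖ + pₗ` lies in that neighbourhood, contradicting `χ pₖ = 1/2`.
-/

open Filter Set Topology

lemma Filter.comap_nhds_eq_principal_of_finite_range {α β : Type*} [TopologicalSpace β]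
    [T1Space β] {f : α → β} (hf : (range f).Finite) (x : α) :
    comap f (𝓝 (f x)) = 𝓟 (f ⁻¹' {f x}) := by
  rw [← comap_nhdsWithin_range, isDiscrete_iff_nhdsWithin.1 hf.isDiscrete _ (mem_range_self x),
    comap_pure]

lemma Continuous.eventually_retraction_mem {X : Type*} [TopologicalSpace X] {P : X → Prop}
    {r : X → Subtype P} (hr : Continuous r) (hrP : ∀ x : Subtype P, r x = x) (x : Subtype P)
    {u : Set X} (hu : u ∈ 𝓝 (x : X)) : ∀ᶠ y in 𝓝 (x : X), (r y : X) ∈ u := by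
  have hx : Tendsto (fun y => (r y : X)) (𝓝 (x : X)) (𝓝 (x : X)) := by
    simpa [Function.comp_def, hrP x] using (continuous_subtype_val.comp hr).tendsto (x : X)
  exact hx hu

section BoundedExponent

variable {G : Type*} [AddCommGroup G] {n : ℕ}

lemma AddMonoidHom.range_subset_torsion {H : Type*} [AddCommGroup H] (hG : ∀ x : G, n • x = 0)
    (χ : G →+ H) : Set.range χ ⊆ {u | n • u = 0} := by
  rintro _ ⟨x, rfl⟩
  simp [← map_nsmul, hG]

theorem bohrTopology_nhds_hasBasis (hn : n ≠ 0) (hG : ∀ x : G, n • x = 0) (x : G) :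
    (@nhds G (bohrTopology G) x).HasBasis (fun t : Set (G →+ AddCircle (1 : ℝ)) => t.Finite)
      fun t => {y | ∀ ψ ∈ t, ψ y = ψ x} := by
  have h𝓝 : @nhds G (bohrTopology G) x = ⨅ ψ : G →+ AddCircle (1 : ℝ), 𝓟 (ψ ⁻¹' {ψ x}) := by
    rw [bohrTopology, nhds_iInf]
    congr! with ψ
    rw [nhds_induced]
    exact comap_nhds_eq_principal_of_finite_range
      ((AddCircle.finite_torsion 1 (Nat.pos_of_ne_zero hn)).subset (ψ.range_subset_torsion hG)) x
  rw [h𝓝]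
  convert hasBasis_iInf_principal_finite _ with t
  ext y
  simp

theorem exists_lt_forall_map_eq (hn : n ≠ 0) (hG : ∀ x : G, n • x = 0)
    {t : Set (G →+ AddCircle (1 : ℝ))} (ht : t.Finite) {α : Type*} [LinearOrder α] {s : Set α}
    (hs : s.Infinite) (x : α → G) : ∃ i ∈ s, ∃ j ∈ s, i < j ∧ ∀ ψ ∈ t, ψ (x i) = ψ (x j) := by
  have : Finite t := ht.to_subtype
  obtain ⟨i, hi, j, hj, hij, h⟩ := hs.exists_lt_map_eq_of_mapsTo
    (f := fun i (ψ : t) => (ψ : G →+ AddCircle (1 : ℝ)) (x i))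
    (t := univ.pi fun _ => {u | n • u = 0})
    (fun i _ => mem_univ_pi.2 fun ψ => ψ.1.range_subset_torsion hG (mem_range_self (x i)))
    (Finite.pi fun _ => AddCircle.finite_torsion 1 (Nat.pos_of_ne_zero hn))
  exact ⟨i, hi, j, hj, hij, fun ψ hψ => congrFun h ⟨ψ, hψ⟩⟩

theorem exists_seq_pairs_forall_map_eq (hn : n ≠ 0) (hG : ∀ x : G, n • x = 0) (e : ℕ → G)
    {Q : ℕ × ℕ → Set (G →+ AddCircle (1 : ℝ))} (hQ : ∀ q : ℕ × ℕ, q.1 < q.2 → (Q q).Finite) :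
    ∃ p : ℕ → ℕ × ℕ, (∀ k, (p k).1 < (p k).2) ∧ (∀ k l, (p k).2 ≠ (p l).1) ∧
      ∀ k l, k < l → ∀ ψ ∈ Q (p k), ψ (e (p l).1) = ψ (e (p l).2) := by
  obtain ⟨p, hp, hpp⟩ := exists_seq_of_forall_finset_exists (fun q : ℕ × ℕ => q.1 < q.2)
      (fun q q' => q.2 < q'.1 ∧ ∀ ψ ∈ Q q, ψ (e q'.1) = ψ (e q'.2)) fun s hs => by
    obtain ⟨i, hi, j, -, hij, hmatch⟩ := exists_lt_forall_map_eq hn hG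
      (s.finite_toSet.biUnion fun q hq => hQ q (hs q hq)) (Ioi_infinite (s.sup Prod.snd)) e
    exact ⟨(i, j), hij, fun q hq =>
      ⟨(Finset.le_sup hq).trans_lt hi, fun ψ hψ => hmatch ψ (mem_biUnion hq hψ)⟩⟩
  refine ⟨p, hp, fun k l => ?_, fun k l hkl => (hpp k l hkl).2⟩
  rcases lt_trichotomy k l with h | rfl | h
  · exact (hpp k l h).1.ne
  · exact (hp k).ne'
  · exact ((hp l).trans ((hpp l k h).1.trans (hp k))).ne'

end BoundedExponent

namespace Finsupp

variable {ι : Type*}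

noncomputable def pair (q : ι × ι) : ι →₀ ZMod 2 := single q.1 1 + single q.2 1

lemma card_support_pair {q : ι × ι} (hq : q.1 ≠ q.2) : (pair q).support.card = 2 := by
  classical
  rw [pair, support_single_add_single hq one_ne_zero one_ne_zero, Finset.card_pair hq]

lemma eq_pair_of_apply_eq_one {y : ι →₀ ZMod 2} (hy : y.support.card = 2) {q : ι × ι}
    (hq : q.1 ≠ q.2) (h₁ : y q.1 = 1) (h₂ : y q.2 = 1) : y = pair q := by
  classical
  have hsupp : y.support = {q.1, q.2} :=
    (Finset.eq_of_subset_of_card_le (by simp [Finset.insert_subset_iff, h₁, h₂])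
      (by rw [hy, Finset.card_pair hq])).symm
  ext i
  by_cases hi : i = q.1 ∨ i = q.2
  · rcases hi with rfl | rfl <;> simp [pair, hq, hq.symm, h₁, h₂]
  · push Not at hi
    have : i ∉ y.support := by simp [hsupp, hi.1, hi.2]
    rw [notMem_support_iff.1 this]
    simp [pair, Ne.symm hi.1, Ne.symm hi.2]

lemma map_pair_eq_zero {H : Type*} [AddCommGroup H] (ψ : (ι →₀ ZMod 2) →+ H) {q : ι × ι}
    (h : ψ (single q.1 1) = ψ (single q.2 1)) : ψ (pair q) = 0 := by
  rw [pair, map_add, h, ← map_add, ZModModule.add_self, map_zero]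

noncomputable def setChar (S : Set ι) : (ι →₀ ZMod 2) →+ AddCircle (1 : ℝ) :=
  liftAddHom (S.indicator fun _ => ZMod.toAddCircle)

lemma setChar_pair {S : Set ι} {q : ι × ι} (h₁ : q.1 ∈ S) (h₂ : q.2 ∉ S) :
    setChar S (pair q) = ZMod.toAddCircle (1 : ZMod 2) := by
  simp [setChar, pair, h₁, h₂]

theorem bohrTopology_pair_isolated {q : ι × ι} (hq : q.1 ≠ q.2) :
    ∀ᶠ y in @nhds _ (bohrTopology (ι →₀ ZMod 2)) (pair q),
      (y = 0 ∨ y.support.card = 2) → y = pair q := by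
  refine (bohrTopology_nhds_hasBasis two_ne_zero (ZModModule.char_nsmul_eq_zero 2) _).mem_iff.2
    ⟨{ZMod.toAddCircle.comp (applyAddHom q.1), ZMod.toAddCircle.comp (applyAddHom q.2)},
      toFinite _, fun y hy hyD => ?_⟩
  obtain ⟨h₁, h₂⟩ : y q.1 = 1 ∧ y q.2 = 1 := by simpa [pair, hq, hq.symm] using hy
  rcases hyD with rfl | hy2
  · simp at h₁
  · exact eq_pair_of_apply_eq_one hy2 hq h₁ h₂

theorem exists_finite_forall_retraction_eq_pair
    {r : (ι →₀ ZMod 2) → {x : ι →₀ ZMod 2 // x = 0 ∨ x.support.card = 2}}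
    (hrD : ∀ x : {x : ι →₀ ZMod 2 // x = 0 ∨ x.support.card = 2}, r x = x) {q : ι × ι}
    (hq : q.1 ≠ q.2) :
    letI := bohrTopology (ι →₀ ZMod 2)
    Continuous r → ∃ t : Set ((ι →₀ ZMod 2) →+ AddCircle (1 : ℝ)), t.Finite ∧
      ∀ y, (∀ ψ ∈ t, ψ y = ψ (pair q)) → (r y : ι →₀ ZMod 2) = pair q := by
  intro hr
  let := bohrTopology (ι →₀ ZMod 2)
  obtain ⟨t, ht, hsub⟩ :=
    (bohrTopology_nhds_hasBasis two_ne_zero (ZModModule.char_nsmul_eq_zero 2) _).mem_iff.1 <|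
      hr.eventually_retraction_mem hrD ⟨pair q, Or.inr (card_support_pair hq)⟩
        (bohrTopology_pair_isolated hq)
  exact ⟨t, ht, fun y hy => hsub hy (r y).2⟩

end Finsupp

open Finsupp in
/-- (Gladdines) `𝒟_ω = {0} ∪ [ω]²` is not a retract of `B_ω^#`. -/
theorem bohr_pairs_not_retract :
    letI := bohrTopology (ℕ →₀ ZMod 2)
    ¬ ∃ r : (ℕ →₀ ZMod 2) → {x : ℕ →₀ ZMod 2 // x = 0 ∨ x.support.card = 2},
        Continuous r ∧
          ∀ x : {x : ℕ →₀ ZMod 2 // x = 0 ∨ x.support.card = 2}, r ↑x = x := by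
  let := bohrTopology (ℕ →₀ ZMod 2)
  rintro ⟨r, hr, hrD⟩
  have hexp := ZModModule.char_nsmul_eq_zero 2 (G := ℕ →₀ ZMod 2)
  choose! Q hQfin hQ using fun (q : ℕ × ℕ) (hq : q.1 < q.2) =>
    exists_finite_forall_retraction_eq_pair hrD hq.ne hr
  obtain ⟨p, hp, hsep, hinv⟩ :=
    exists_seq_pairs_forall_map_eq two_ne_zero hexp (fun i => single i 1) hQfin
  let A := range fun k => (p k).1
  obtain ⟨t, ht, h0⟩ := (bohrTopology_nhds_hasBasis two_ne_zero hexp 0).mem_iff.1 <|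
    hr.eventually_retraction_mem hrD ⟨0, Or.inl rfl⟩
      ((bohrTopology_nhds_hasBasis two_ne_zero hexp 0).mem_of_mem (finite_singleton (setChar A)))
  obtain ⟨k, -, l, -, hkl, hprof⟩ :=
    exists_lt_forall_map_eq two_ne_zero hexp ht infinite_univ fun k => pair (p k)
  have hrk : (r (pair (p k) + pair (p l)) : ℕ →₀ ZMod 2) = pair (p k) :=
    hQ _ (hp k) _ fun ψ hψ => by rw [map_add, map_pair_eq_zero ψ (hinv k l hkl ψ hψ), add_zero]
  have hχ : setChar A (r (pair (p k) + pair (p l))) = setChar A 0 :=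
    h0 (fun ψ hψ => by rw [map_add, hprof ψ hψ, ← map_add, ZModModule.add_self]) _ rfl
  have hbk : (p k).2 ∉ A := by
    rintro ⟨j, hj⟩
    exact hsep k j hj.symm
  rw [hrk, setChar_pair (mem_range_self k) hbk, map_zero] at hχ
  exact one_ne_zero (ZMod.toAddCircle_eq_zero.1 hχ)
end
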